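/- For every s-state IL finite-state encoder E, every x^n, and every ℓ ≤ n, the compression ratio satisfies ρ_E(x^n) ≥ (1 − ℓ/n)·Ĥ_sw(X^ℓ|Z)/ℓ − (1/ℓ)·log₂{s·[1 + log₂(1 + α^ℓ/s)]}, where Ĥ_sw(X^ℓ|Z) is the conditional sliding-window empirical entropy of ℓ-blocks given the encoder state at the start of the block. -/

import Mathlib

/-- Output bit string of a finite-state encoder `(f,g)` on an input segment,
starting from a given state. -/
def encodeFS {X Z : Type} (f : Z → X → List Bool) (g : Z → X → Z) : Z → List X → List Bool
  | _, [] => []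
  | z, a :: r => f z a ++ encodeFS f g (g z a) r

/-- Shannon entropy (in bits) of a distribution on a finite set. -/
noncomputable def entD {S : Type} [Fintype S] (P : S → ℝ) : ℝ :=
  -∑ w, P w * Real.logb 2 (P w)

/-- Joint sliding-window empirical distribution of (state at start of window, `ℓ`-block). -/
noncomputable def swJoint {X Z : Type} [Fintype X] [DecidableEq X] [Fintype Z] [DecidableEq Z]
    (zs : ℕ → Z) (x : ℕ → X) (n ℓ : ℕ) (p : Z × (Fin ℓ → X)) : ℝ :=
  (((Finset.range (n - ℓ + 1)).filter fun i =>
      zs i = p.1 ∧ ∀ j : Fin ℓ, x (i + (j : ℕ)) = p.2 j).card : ℝ) / (n - ℓ + 1)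

/-- Sliding-window empirical distribution of the state. -/
noncomputable def swStateDist {Z : Type} [Fintype Z] [DecidableEq Z]
    (zs : ℕ → Z) (n ℓ : ℕ) (z : Z) : ℝ :=
  (((Finset.range (n - ℓ + 1)).filter fun i => zs i = z).card : ℝ) / (n - ℓ + 1)

section Aux

lemma gibbs {ι : Type*} (s : Finset ι) (p q : ι → ℝ)
    (hp : ∀ i ∈ s, 0 ≤ p i) (hq : ∀ i ∈ s, 0 ≤ q i)
    (hpq : ∀ i ∈ s, p i ≠ 0 → 0 < q i)
    (hsum : ∑ i ∈ s, q i ≤ ∑ i ∈ s, p i) :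
    ∑ i ∈ s, p i * Real.log (q i) ≤ ∑ i ∈ s, p i * Real.log (p i) := by
  have key : ∀ i ∈ s, p i * Real.log (q i) - p i * Real.log (p i) ≤ q i - p i := by
    intro i hi
    rcases eq_or_lt_of_le (hp i hi) with h0 | h0
    · rw [← h0]; simpa using hq i hi
    · have hqi := hpq i hi (ne_of_gt h0)
      have hdiv : Real.log (q i) - Real.log (p i) = Real.log (q i / p i) :=
        (Real.log_div (ne_of_gt hqi) (ne_of_gt h0)).symm
      have hlog : Real.log (q i / p i) ≤ q i / p i - 1 :=
        Real.log_le_sub_one_of_pos (by positivity)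
      have h2 : p i * Real.log (q i / p i) ≤ p i * (q i / p i - 1) :=
        mul_le_mul_of_nonneg_left hlog (le_of_lt h0)
      have h3 : p i * (q i / p i - 1) = q i - p i := by
        field_simp
      nlinarith [h2, h3, hdiv]
  have h := Finset.sum_le_sum key
  rw [Finset.sum_sub_distrib, Finset.sum_sub_distrib] at h
  linarith

lemma sum_count_mul {ι β : Type*} [Fintype β] [DecidableEq β] (s : Finset ι)
    (c : ι → β) (F : β → ℝ) :
    ∑ b : β, ((s.filter fun i => c i = b).card : ℝ) * F b = ∑ i ∈ s, F (c i) := by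
  have h : ∀ b : β, ((s.filter fun i => c i = b).card : ℝ) * F b
      = ∑ i ∈ s, if c i = b then F b else 0 := by
    intro b
    rw [Finset.card_filter]
    push_cast
    rw [Finset.sum_mul]
    congr 1; ext i
    by_cases h : c i = b <;> simp [h]
  rw [Finset.sum_congr rfl fun b _ => h b, Finset.sum_comm]
  apply Finset.sum_congr rfl
  intro i _
  simp

lemma marg {ι β γ : Type*} [Fintype γ] [DecidableEq β] [DecidableEq γ]
    (s : Finset ι) (c : ι → β) (d : ι → γ) (b : β) :
    ∑ w : γ, (((s.filter fun i => (c i, d i) = (b, w)).card : ℝ))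
      = ((s.filter fun i => c i = b).card : ℝ) := by
  have h : ∀ w : γ, ((s.filter fun i => (c i, d i) = (b, w)).card : ℝ)
      = ∑ i ∈ s, if (c i, d i) = (b, w) then (1:ℝ) else 0 := by
    intro w
    rw [Finset.card_filter]
    push_cast
    rfl
  rw [Finset.sum_congr rfl fun w _ => h w, Finset.sum_comm, Finset.card_filter]
  push_cast
  apply Finset.sum_congr rfl
  intro i _
  by_cases hc : c i = b
  · simp [Prod.ext_iff, hc]
  · simp [Prod.ext_iff, hc]

lemma encode_traj_len {X Z : Type} (f : Z → X → List Bool) (g : Z → X → Z)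
    (x : ℕ → X) (zs : ℕ → Z) (hz : ∀ i, zs (i + 1) = g (zs i) (x i)) :
    ∀ m i, (encodeFS f g (zs i) (List.ofFn fun j : Fin m => x (i + (j : ℕ)))).length
      = ∑ j ∈ Finset.range m, (f (zs (i + j)) (x (i + j))).length := by
  intro m
  induction m with
  | zero => intro i; simp [encodeFS]
  | succ m ih =>
    intro i
    rw [List.ofFn_succ]
    show (f (zs i) (x (i + 0)) ++
      encodeFS f g (g (zs i) (x (i + 0)))
        (List.ofFn fun j : Fin m => x (i + ((j.succ : Fin (m+1)) : ℕ)))).length = _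
    have e1 : (fun j : Fin m => x (i + ((j.succ : Fin (m+1)) : ℕ))) =
        (fun j : Fin m => x ((i + 1) + (j : ℕ))) := by
      funext j; congr 1; simp [Fin.val_succ]; omega
    rw [e1, List.length_append]
    have e2 : g (zs i) (x (i + 0)) = zs (i + 1) := by
      rw [hz i]; norm_num
    rw [e2, ih (i + 1), Finset.sum_range_succ']
    simp only [Nat.add_zero]
    rw [add_comm]
    congr 1
    apply Finset.sum_congr rfl
    intro j _
    have e : i + 1 + j = i + (j + 1) := by omega
    rw [e]

lemma kraft_sum {W : Type} [Fintype W] (L : W → ℕ) (s : ℕ)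
    (hcount : ∀ t, ((Finset.univ.filter fun w : W => L w = t).card) ≤ s * 2 ^ t)
    (T : ℕ) (hT : Fintype.card W ≤ s * (2 ^ (T + 1) - 1)) :
    ∑ w : W, ((2:ℝ) ^ (L w))⁻¹ ≤ s * (T + 1) := by
  classical
  set A : Finset W := Finset.univ.filter fun w => L w ≤ T with hA
  set B : Finset W := Finset.univ.filter fun w => ¬ (L w ≤ T) with hB
  have hsplit : ∑ w : W, ((2:ℝ) ^ (L w))⁻¹
      = ∑ w ∈ A, ((2:ℝ) ^ (L w))⁻¹ + ∑ w ∈ B, ((2:ℝ) ^ (L w))⁻¹ :=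
    (Finset.sum_filter_add_sum_filter_not _ _ _).symm
  have hmap : ∀ w ∈ A, L w ∈ Finset.range (T + 1) := by
    intro w hw
    simp only [hA, Finset.mem_filter] at hw
    simp [Nat.lt_succ_iff, hw.2]
  have hfib : ∑ t ∈ Finset.range (T + 1), ∑ w ∈ A.filter fun w => L w = t, ((2:ℝ) ^ (L w))⁻¹
      = ∑ w ∈ A, ((2:ℝ) ^ (L w))⁻¹ := Finset.sum_fiberwise_of_maps_to hmap _
  have hAfil : ∀ t ∈ Finset.range (T + 1), A.filter (fun w => L w = t)
      = Finset.univ.filter fun w : W => L w = t := by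
    intro t ht
    simp only [hA, Finset.filter_filter]
    apply Finset.filter_congr
    intro w _
    simp only [Finset.mem_range, Nat.lt_succ_iff] at ht
    constructor
    · rintro ⟨_, h⟩; exact h
    · rintro h; exact ⟨h ▸ ht, h⟩
  set m : ℕ → ℕ := fun t => (Finset.univ.filter fun w : W => L w = t).card with hm
  have hhead : ∑ w ∈ A, ((2:ℝ) ^ (L w))⁻¹
      = ∑ t ∈ Finset.range (T + 1), (m t : ℝ) * ((2:ℝ) ^ t)⁻¹ := by
    rw [← hfib]
    apply Finset.sum_congr rfl
    intro t ht
    rw [hAfil t ht]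
    rw [Finset.sum_congr rfl (fun w hw => by
      simp only [Finset.mem_filter] at hw
      rw [hw.2])]
    simp [hm, mul_comm]
  have hheadle : ∑ t ∈ Finset.range (T + 1), (m t : ℝ) * ((2:ℝ) ^ t)⁻¹
      ≤ ∑ t ∈ Finset.range (T + 1),
        ((s : ℝ) - ((s : ℝ) * 2 ^ t - m t) * ((2:ℝ) ^ (T + 1))⁻¹) := by
    apply Finset.sum_le_sum
    intro t ht
    simp only [Finset.mem_range, Nat.lt_succ_iff] at ht
    have hd : (m t : ℝ) ≤ (s : ℝ) * 2 ^ t := by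
      have := hcount t
      push_cast [hm]
      exact_mod_cast this
    have h2 : ((2:ℝ) ^ (T + 1))⁻¹ ≤ ((2:ℝ) ^ t)⁻¹ := by
      apply inv_anti₀ (by positivity)
      apply pow_le_pow_right₀ (by norm_num)
      omega
    have hpt : (0:ℝ) < (2:ℝ) ^ t := by positivity
    have hmul : (2:ℝ) ^ t * ((2:ℝ) ^ t)⁻¹ = 1 := mul_inv_cancel₀ (ne_of_gt hpt)
    nlinarith [mul_le_mul_of_nonneg_left h2 (sub_nonneg.2 hd), hmul,
      mul_pos hpt (inv_pos.2 hpt)]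
  have hnat : A.card = ∑ t ∈ Finset.range (T + 1), m t := by
    rw [Finset.card_eq_sum_card_fiberwise hmap]
    exact Finset.sum_congr rfl fun t ht => by rw [hAfil t ht]
  have hsumA : ∑ t ∈ Finset.range (T + 1), (m t : ℝ) = (A.card : ℝ) := by
    rw [hnat]; push_cast; ring
  have hgeom : ∑ t ∈ Finset.range (T + 1), (s : ℝ) * 2 ^ t
      = (s : ℝ) * (2 ^ (T + 1) - 1) := by
    rw [← Finset.mul_sum, geom_sum_eq (by norm_num)]
    ring
  have htail : ∑ w ∈ B, ((2:ℝ) ^ (L w))⁻¹ ≤ (B.card : ℝ) * ((2:ℝ) ^ (T + 1))⁻¹ := by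
    calc ∑ w ∈ B, ((2:ℝ) ^ (L w))⁻¹ ≤ ∑ _w ∈ B, ((2:ℝ) ^ (T + 1))⁻¹ := by
          apply Finset.sum_le_sum
          intro w hw
          simp only [hB, Finset.mem_filter, not_le] at hw
          apply inv_anti₀ (by positivity)
          apply pow_le_pow_right₀ (by norm_num)
          omega
      _ = (B.card : ℝ) * ((2:ℝ) ^ (T + 1))⁻¹ := by
          rw [Finset.sum_const, nsmul_eq_mul]
  have hABcard : (A.card : ℝ) + (B.card : ℝ) = (Fintype.card W : ℝ) := by
    have := Finset.card_filter_add_card_filter_not (s := (Finset.univ : Finset W))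
      (p := fun w => L w ≤ T)
    rw [Finset.card_univ] at this
    exact_mod_cast this
  have hTr : (Fintype.card W : ℝ) ≤ (s : ℝ) * ((2:ℝ) ^ (T + 1) - 1) := by
    have h1 : (1:ℕ) ≤ 2 ^ (T + 1) := Nat.one_le_two_pow
    calc (Fintype.card W : ℝ) ≤ ((s * (2 ^ (T + 1) - 1) : ℕ) : ℝ) := by exact_mod_cast hT
      _ = (s : ℝ) * ((2:ℝ) ^ (T + 1) - 1) := by
          push_cast [Nat.cast_sub h1]; ring
  have hsub : ∑ t ∈ Finset.range (T + 1),
      ((s : ℝ) - ((s : ℝ) * 2 ^ t - m t) * ((2:ℝ) ^ (T + 1))⁻¹)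
      = (s : ℝ) * (T + 1) - ((s : ℝ) * ((2:ℝ) ^ (T + 1) - 1) - A.card) * ((2:ℝ) ^ (T + 1))⁻¹ := by
    rw [Finset.sum_sub_distrib, Finset.sum_const, Finset.card_range, nsmul_eq_mul]
    rw [← Finset.sum_mul, Finset.sum_sub_distrib, hgeom, hsumA]
    push_cast
    ring
  have hc : (0:ℝ) < ((2:ℝ) ^ (T + 1))⁻¹ := by positivity
  rw [hsplit, hhead]
  nlinarith [hheadle, htail, hsub, hc, hABcard, hTr,
    mul_le_mul_of_nonneg_right (by linarith [hABcard, hTr] :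
      (A.card : ℝ) + B.card ≤ (s : ℝ) * ((2:ℝ) ^ (T + 1) - 1)) (le_of_lt hc)]

lemma encode_count {X Z : Type} [Fintype X] [DecidableEq X] [Fintype Z] [DecidableEq Z]
    (f : Z → X → List Bool) (g : Z → X → Z)
    (hIL : ∀ z (l₁ l₂ : List X), l₁.length = l₂.length →
      encodeFS f g z l₁ = encodeFS f g z l₂ → l₁.foldl g z = l₂.foldl g z → l₁ = l₂)
    (z : Z) (ℓ t : ℕ) :
    ((Finset.univ.filter fun w : Fin ℓ → X =>
        (encodeFS f g z (List.ofFn w)).length = t).card) ≤ Fintype.card Z * 2 ^ t := by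
  classical
  rw [← Fintype.card_subtype]
  have hinj : Function.Injective
      (fun w : {w : Fin ℓ → X // (encodeFS f g z (List.ofFn w)).length = t} =>
        ((fun j : Fin t => (encodeFS f g z (List.ofFn w.1)).get ⟨j.1, by rw [w.2]; exact j.2⟩),
          (List.ofFn w.1).foldl g z)) := by
    intro w₁ w₂ h
    simp only [Prod.mk.injEq] at h
    have hcode : encodeFS f g z (List.ofFn w₁.1) = encodeFS f g z (List.ofFn w₂.1) := by
      apply List.ext_get (by rw [w₁.2, w₂.2])
      intro i h1 h2
      have := congrFun h.1 ⟨i, by rw [← w₁.2]; exact h1⟩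
      simpa using this
    have hlist : List.ofFn w₁.1 = List.ofFn w₂.1 :=
      hIL z _ _ (by simp) hcode h.2
    ext j
    exact List.ofFn_injective hlist ▸ rfl
  calc Fintype.card {w : Fin ℓ → X // (encodeFS f g z (List.ofFn w)).length = t}
      ≤ Fintype.card ((Fin t → Bool) × Z) := Fintype.card_le_of_injective _ hinj
    _ = Fintype.card Z * 2 ^ t := by
        simp [Fintype.card_prod, Fintype.card_fun]
        ring

lemma T_bound (M s : ℕ) (hM : 1 ≤ M) (hs : 1 ≤ s) :
    ∃ T : ℕ, M ≤ s * (2 ^ (T + 1) - 1) ∧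
      ((T : ℝ) + 1) ≤ 1 + Real.logb 2 (1 + (M : ℝ) / (s : ℝ)) := by
  have hex : ∃ T : ℕ, M ≤ s * (2 ^ (T + 1) - 1) := by
    refine ⟨M, ?_⟩
    have h1 : M < 2 ^ M := Nat.lt_two_pow_self
    have h2 : 2 ^ M ≤ 2 ^ (M + 1) - 1 := by
      have : 2 ^ (M + 1) = 2 * 2 ^ M := by ring
      omega
    calc M ≤ 2 ^ (M + 1) - 1 := by omega
      _ ≤ s * (2 ^ (M + 1) - 1) := Nat.le_mul_of_pos_left _ hs
  refine ⟨Nat.find hex, Nat.find_spec hex, ?_⟩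
  have hspos : (0:ℝ) < (s:ℝ) := by exact_mod_cast hs
  have hlogb_nonneg : 0 ≤ Real.logb 2 (1 + (M : ℝ) / (s : ℝ)) := by
    apply Real.logb_nonneg (by norm_num)
    have : 0 ≤ (M:ℝ)/(s:ℝ) := by positivity
    linarith
  rcases Nat.eq_zero_or_pos (Nat.find hex) with h0 | hpos
  · rw [h0]; push_cast; linarith
  · set T := Nat.find hex with hT
    have hmin : ¬ (M ≤ s * (2 ^ ((T - 1) + 1) - 1)) := Nat.find_min hex (by omega)
    have hTT : (T - 1) + 1 = T := by omega
    rw [hTT] at hmin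
    push_neg at hmin
    have hr : (s:ℝ) * ((2:ℝ) ^ T - 1) < M := by
      have h1 : (1:ℕ) ≤ 2 ^ T := Nat.one_le_two_pow
      have : ((s * (2 ^ T - 1) : ℕ) : ℝ) < (M : ℝ) := by exact_mod_cast hmin
      calc (s:ℝ) * ((2:ℝ) ^ T - 1) = ((s * (2 ^ T - 1) : ℕ) : ℝ) := by
            push_cast [Nat.cast_sub h1]; ring
        _ < (M:ℝ) := this
    have h2T : (2:ℝ) ^ T < 1 + (M:ℝ)/(s:ℝ) := by
      rw [show (1:ℝ) + (M:ℝ)/(s:ℝ) = ((s:ℝ) + (M:ℝ))/(s:ℝ) by field_simp]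
      rw [lt_div_iff₀ hspos]
      nlinarith
    have hlog : (T:ℝ) < Real.logb 2 (1 + (M : ℝ) / (s : ℝ)) := by
      have := Real.logb_lt_logb (by norm_num : (1:ℝ) < 2) (by positivity) h2T
      simpa [Real.logb_pow, Real.logb_self_eq_one] using this
    linarith

lemma div_le_div_of_le_pos' {a b c : ℝ} (h : a ≤ b) (hc : 0 < c) : a / c ≤ b / c := by
  rw [div_eq_mul_inv, div_eq_mul_inv]
  exact mul_le_mul_of_nonneg_right h (le_of_lt (inv_pos.2 hc))

end Aux

/-- **Per-encoder lower bound via the generalized Kraft inequality:**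
for every `s`-state IL finite-state encoder `E`, every `x^n`, and every `ℓ ≤ n`,
`ρ_E(x^n) ≥ (1 − ℓ/n)·Ĥ_sw(X^ℓ|Z)/ℓ − (1/ℓ)·log₂{s·[1 + log₂(1 + α^ℓ/s)]}`,
where `Ĥ_sw(X^ℓ|Z)` is the conditional sliding-window empirical entropy of
`ℓ`-blocks given the encoder state at the start of the block. -/
theorem stmt_6 {X Z : Type} [Fintype X] [DecidableEq X] [Fintype Z] [DecidableEq Z] [Nonempty Z]
    (f : Z → X → List Bool) (g : Z → X → Z)
    (hIL : ∀ z (l₁ l₂ : List X), l₁.length = l₂.length →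
      encodeFS f g z l₁ = encodeFS f g z l₂ → l₁.foldl g z = l₂.foldl g z → l₁ = l₂)
    (x : ℕ → X) (zs : ℕ → Z) (hz : ∀ i, zs (i + 1) = g (zs i) (x i))
    (n ℓ : ℕ) (hℓ : 1 ≤ ℓ) (hn : ℓ ≤ n) :
    (∑ i ∈ Finset.range n, ((f (zs i) (x i)).length : ℝ)) / n ≥
      (1 - (ℓ : ℝ) / n) *
        ((entD (swJoint zs x n ℓ) - entD (swStateDist zs n ℓ)) / ℓ) -
      (1 / (ℓ : ℝ)) * Real.logb 2 ((Fintype.card Z : ℝ) *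
        (1 + Real.logb 2 (1 + (Fintype.card X : ℝ) ^ ℓ / (Fintype.card Z : ℝ)))) := by
  classical
  have hX : Nonempty X := ⟨x 0⟩
  have hnpos : 0 < n := lt_of_lt_of_le hℓ hn
  set N : ℕ := n - ℓ + 1 with hN
  have hNrN : ((n : ℝ) - (ℓ : ℝ) + 1) = (N : ℝ) := by
    rw [hN]; push_cast [Nat.cast_sub hn]; ring
  have hNrpos : (0:ℝ) < (n : ℝ) - (ℓ : ℝ) + 1 := by
    rw [hNrN]; positivity
  set Nr : ℝ := (n : ℝ) - (ℓ : ℝ) + 1 with hNrdef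
  set c : ℕ → Z × (Fin ℓ → X) := fun i => (zs i, fun j => x (i + (j : ℕ))) with hc
  set L : Z × (Fin ℓ → X) → ℕ := fun p => (encodeFS f g p.1 (List.ofFn p.2)).length with hL
  set sZ : ℝ := (Fintype.card Z : ℝ) with hsZ
  set C : ℝ := sZ * (1 + Real.logb 2 (1 + (Fintype.card X : ℝ) ^ ℓ / sZ)) with hC
  have hsZ1 : (1:ℝ) ≤ sZ := by
    rw [hsZ]; exact_mod_cast Fintype.card_pos
  have hαpos : (0:ℝ) < (Fintype.card X : ℝ) := by
    exact_mod_cast Fintype.card_pos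
  have hC1 : (1:ℝ) ≤ C := by
    rw [hC]
    have hlb : 0 ≤ Real.logb 2 (1 + (Fintype.card X : ℝ) ^ ℓ / sZ) := by
      apply Real.logb_nonneg (by norm_num)
      have : 0 ≤ (Fintype.card X : ℝ) ^ ℓ / sZ := by positivity
      linarith
    nlinarith
  have hCpos : (0:ℝ) < C := lt_of_lt_of_le one_pos hC1
  have hlogC : 0 ≤ Real.logb 2 C := Real.logb_nonneg (by norm_num) hC1
  -- identification of swJoint through the classifier c
  have hJoint : ∀ p, swJoint zs x n ℓ p
      = (((Finset.range N).filter fun i => c i = p).card : ℝ) / Nr := by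
    intro p
    unfold swJoint
    rw [← hN]
    have hfe : (Finset.range N).filter
        (fun i => zs i = p.1 ∧ ∀ j : Fin ℓ, x (i + (j : ℕ)) = p.2 j)
        = (Finset.range N).filter fun i => c i = p := by
      apply Finset.filter_congr
      intro i _
      simp only [hc, Prod.ext_iff, funext_iff]
    rw [hfe]
  have hState : ∀ z, swStateDist zs n ℓ z
      = (((Finset.range N).filter fun i => zs i = z).card : ℝ) / Nr := by
    intro z
    unfold swStateDist
    rw [← hN]
  -- basic distribution facts
  have hPnn : ∀ p, 0 ≤ swJoint zs x n ℓ p := by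
    intro p; rw [hJoint p]; positivity
  have hPsum : ∑ p : Z × (Fin ℓ → X), swJoint zs x n ℓ p = 1 := by
    rw [Finset.sum_congr rfl fun p _ => hJoint p, ← Finset.sum_div]
    have h1 : (∑ p : Z × (Fin ℓ → X), (((Finset.range N).filter fun i => c i = p).card : ℝ))
        = ∑ _i ∈ Finset.range N, (1:ℝ) := by
      have := sum_count_mul (Finset.range N) c (fun _ => (1:ℝ))
      simpa using this
    rw [h1, Finset.sum_const, Finset.card_range, nsmul_eq_mul, mul_one, hNrN]
    have hN0 : (0:ℝ) < (N:ℝ) := hNrN ▸ hNrpos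
    exact div_self (ne_of_gt hN0)
  have hMarg : ∀ z, swStateDist zs n ℓ z = ∑ w : Fin ℓ → X, swJoint zs x n ℓ (z, w) := by
    intro z
    rw [hState z]
    rw [Finset.sum_congr rfl fun w _ => hJoint (z, w), ← Finset.sum_div]
    congr 1
    rw [← marg (Finset.range N) zs (fun i => fun j : Fin ℓ => x (i + (j:ℕ))) z]
  have hPZnn : ∀ z, 0 ≤ swStateDist zs n ℓ z := by
    intro z; rw [hState z]; positivity
  have hPZsum : ∑ z : Z, swStateDist zs n ℓ z = 1 := by
    rw [Finset.sum_congr rfl fun z _ => hMarg z, ← Fintype.sum_prod_type, hPsum]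
  -- Kraft inequality per state
  have hKraft : ∀ z : Z, ∑ w : Fin ℓ → X, ((2:ℝ) ^ (L (z, w)))⁻¹ ≤ C := by
    intro z
    obtain ⟨T, hT1, hT2⟩ := T_bound (Fintype.card X ^ ℓ) (Fintype.card Z)
      (Nat.one_le_pow _ _ Fintype.card_pos) Fintype.card_pos
    have hcount : ∀ t, ((Finset.univ.filter fun w : Fin ℓ → X => L (z, w) = t).card)
        ≤ Fintype.card Z * 2 ^ t := fun t => encode_count f g hIL z ℓ t
    have hcardW : Fintype.card (Fin ℓ → X) = Fintype.card X ^ ℓ := by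
      simp [Fintype.card_fun]
    have hk := kraft_sum (fun w : Fin ℓ → X => L (z, w)) (Fintype.card Z) hcount T
      (by rw [hcardW]; exact hT1)
    calc ∑ w : Fin ℓ → X, ((2:ℝ) ^ (L (z, w)))⁻¹ ≤ (Fintype.card Z : ℝ) * (T + 1) := hk
      _ ≤ C := by
          rw [hC, hsZ]
          have : ((Fintype.card X ^ ℓ : ℕ) : ℝ) = (Fintype.card X : ℝ) ^ ℓ := by push_cast; ring
          rw [← this]
          have hz1 : (1:ℝ) ≤ (Fintype.card Z : ℝ) := by exact_mod_cast Fintype.card_pos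
          nlinarith [hT2]
  -- expectation of L under the joint empirical distribution
  have hEL : ∑ p : Z × (Fin ℓ → X), swJoint zs x n ℓ p * (L p : ℝ)
      = (∑ i ∈ Finset.range N, (L (c i) : ℝ)) / Nr := by
    have h1 : ∀ p : Z × (Fin ℓ → X), swJoint zs x n ℓ p * (L p : ℝ)
        = (((Finset.range N).filter fun i => c i = p).card : ℝ) * (L p : ℝ) / Nr := by
      intro p; rw [hJoint p]; ring
    rw [Finset.sum_congr rfl fun p _ => h1 p, ← Finset.sum_div,
      sum_count_mul (Finset.range N) c (fun p => (L p : ℝ))]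
  have hlg : (0:ℝ) < Real.log 2 := Real.log_pos (by norm_num)
  -- Gibbs' inequality with the Kraft-type reference distribution
  set q : Z × (Fin ℓ → X) → ℝ :=
    fun p => swStateDist zs n ℓ p.1 * ((2:ℝ) ^ (L p))⁻¹ / C with hq
  have hqnn : ∀ p, 0 ≤ q p := by
    intro p
    have := hPZnn p.1
    rw [hq]
    positivity
  have hPZposOf : ∀ p : Z × (Fin ℓ → X), swJoint zs x n ℓ p ≠ 0 →
      0 < swStateDist zs n ℓ p.1 := by
    intro p hp0
    have hle : swJoint zs x n ℓ p ≤ swStateDist zs n ℓ p.1 := by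
      rw [hMarg p.1]
      have h := Finset.single_le_sum (f := fun w => swJoint zs x n ℓ (p.1, w))
        (fun w _ => hPnn (p.1, w)) (Finset.mem_univ p.2)
      simpa using h
    have := lt_of_le_of_ne (hPnn p) (Ne.symm hp0)
    linarith
  have hqpos : ∀ p, swJoint zs x n ℓ p ≠ 0 → 0 < q p := by
    intro p hp0
    have h1 := hPZposOf p hp0
    rw [hq]
    positivity
  have hqsum : ∑ p : Z × (Fin ℓ → X), q p ≤ ∑ p : Z × (Fin ℓ → X), swJoint zs x n ℓ p := by
    rw [hPsum, Fintype.sum_prod_type]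
    have hzle : ∀ z : Z, ∑ w : Fin ℓ → X, q (z, w) ≤ swStateDist zs n ℓ z := by
      intro z
      have he : ∑ w : Fin ℓ → X, q (z, w)
          = swStateDist zs n ℓ z * ((∑ w : Fin ℓ → X, ((2:ℝ) ^ (L (z, w)))⁻¹) / C) := by
        rw [← mul_div_assoc, Finset.mul_sum, Finset.sum_div]
      rw [he]
      calc swStateDist zs n ℓ z * ((∑ w : Fin ℓ → X, ((2:ℝ) ^ (L (z, w)))⁻¹) / C)
          ≤ swStateDist zs n ℓ z * 1 := by
            apply mul_le_mul_of_nonneg_left _ (hPZnn z)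
            rw [div_le_one hCpos]
            exact hKraft z
        _ = swStateDist zs n ℓ z := mul_one _
    calc ∑ z : Z, ∑ w : Fin ℓ → X, q (z, w) ≤ ∑ z : Z, swStateDist zs n ℓ z :=
          Finset.sum_le_sum fun z _ => hzle z
      _ = 1 := hPZsum
  have hgb := gibbs Finset.univ (swJoint zs x n ℓ) q (fun p _ => hPnn p)
    (fun p _ => hqnn p) (fun p _ => hqpos p) hqsum
  have hexp : ∀ p : Z × (Fin ℓ → X), swJoint zs x n ℓ p * Real.log (q p)
      = swJoint zs x n ℓ p * Real.log (swStateDist zs n ℓ p.1)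
        - swJoint zs x n ℓ p * (L p : ℝ) * Real.log 2
        - swJoint zs x n ℓ p * Real.log C := by
    intro p
    by_cases hp0 : swJoint zs x n ℓ p = 0
    · rw [hp0]; ring
    · have hPZp := hPZposOf p hp0
      have h2p : (0:ℝ) < (2:ℝ) ^ (L p) := by positivity
      rw [hq]
      show swJoint zs x n ℓ p *
        Real.log (swStateDist zs n ℓ p.1 * ((2:ℝ) ^ (L p))⁻¹ / C) = _
      rw [Real.log_div (by positivity) (ne_of_gt hCpos)]
      rw [Real.log_mul (ne_of_gt hPZp) (by positivity)]
      rw [Real.log_inv, Real.log_pow]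
      push_cast
      ring
  have hA : ∑ p : Z × (Fin ℓ → X), swJoint zs x n ℓ p * Real.log (swStateDist zs n ℓ p.1)
      = ∑ z : Z, swStateDist zs n ℓ z * Real.log (swStateDist zs n ℓ z) := by
    rw [Fintype.sum_prod_type]
    apply Finset.sum_congr rfl
    intro z _
    have hred : ∀ w : Fin ℓ → X,
        swJoint zs x n ℓ (z, w) * Real.log (swStateDist zs n ℓ (z, w).1)
        = swJoint zs x n ℓ (z, w) * Real.log (swStateDist zs n ℓ z) := fun w => rfl
    rw [Finset.sum_congr rfl fun w _ => hred w, ← Finset.sum_mul, ← hMarg z]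
  have hsum_exp : ∑ p : Z × (Fin ℓ → X), swJoint zs x n ℓ p * Real.log (q p)
      = (∑ z : Z, swStateDist zs n ℓ z * Real.log (swStateDist zs n ℓ z))
        - (∑ p : Z × (Fin ℓ → X), swJoint zs x n ℓ p * (L p : ℝ)) * Real.log 2
        - Real.log C := by
    rw [Finset.sum_congr rfl fun p _ => hexp p]
    rw [Finset.sum_sub_distrib, Finset.sum_sub_distrib, hA, ← Finset.sum_mul,
      ← Finset.sum_mul, hPsum]
    ring
  have hent1 : entD (swJoint zs x n ℓ)
      = -((∑ p : Z × (Fin ℓ → X), swJoint zs x n ℓ p * Real.log (swJoint zs x n ℓ p))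
          / Real.log 2) := by
    unfold entD
    rw [Finset.sum_div]
    congr 1
    apply Finset.sum_congr rfl
    intro p _
    rw [← Real.log_div_log]
    ring
  have hent2 : entD (swStateDist zs n ℓ)
      = -((∑ z : Z, swStateDist zs n ℓ z * Real.log (swStateDist zs n ℓ z))
          / Real.log 2) := by
    unfold entD
    rw [Finset.sum_div]
    congr 1
    apply Finset.sum_congr rfl
    intro z _
    rw [← Real.log_div_log]
    ring
  set B : ℝ := ∑ p : Z × (Fin ℓ → X), swJoint zs x n ℓ p * (L p : ℝ) with hB
  set SP : ℝ := ∑ p : Z × (Fin ℓ → X), swJoint zs x n ℓ p * Real.log (swJoint zs x n ℓ p)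
    with hSPdef
  set SA : ℝ := ∑ z : Z, swStateDist zs n ℓ z * Real.log (swStateDist zs n ℓ z) with hSAdef
  have hstar : entD (swJoint zs x n ℓ) - entD (swStateDist zs n ℓ) ≤ B + Real.logb 2 C := by
    rw [hent1, hent2, ← Real.log_div_log]
    rw [hsum_exp] at hgb
    have h1 : SA - SP ≤ B * Real.log 2 + Real.log C := by linarith
    have h2 : (SA - SP) / Real.log 2 ≤ (B * Real.log 2 + Real.log C) / Real.log 2 :=
      div_le_div_of_le_pos' h1 hlg
    have h3 : (B * Real.log 2 + Real.log C) / Real.log 2 = B + Real.log C / Real.log 2 := by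
      field_simp
    have h4 : (SA - SP) / Real.log 2 = SA / Real.log 2 - SP / Real.log 2 := sub_div _ _ _
    linarith [h2, h3, h4]
  -- bound the expected window codelength by the full output length
  have hLci : ∀ i : ℕ, (L (c i) : ℝ)
      = ∑ j ∈ Finset.range ℓ, ((f (zs (i + j)) (x (i + j))).length : ℝ) := by
    intro i
    have h := encode_traj_len f g x zs hz ℓ i
    have hLc : L (c i)
        = (encodeFS f g (zs i) (List.ofFn fun j : Fin ℓ => x (i + (j : ℕ)))).length := rfl
    rw [hLc, h]
    push_cast
    rfl
  have h10 : ∑ i ∈ Finset.range N, (L (c i) : ℝ)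
      ≤ (ℓ : ℝ) * ∑ t ∈ Finset.range n, ((f (zs t) (x t)).length : ℝ) := by
    rw [Finset.sum_congr rfl fun i _ => hLci i, Finset.sum_comm]
    have hjb : ∀ j ∈ Finset.range ℓ,
        ∑ i ∈ Finset.range N, ((f (zs (i + j)) (x (i + j))).length : ℝ)
        ≤ ∑ t ∈ Finset.range n, ((f (zs t) (x t)).length : ℝ) := by
      intro j hj
      simp only [Finset.mem_range] at hj
      have hre : ∑ t ∈ Finset.Ico j (j + N), ((f (zs t) (x t)).length : ℝ)
          = ∑ i ∈ Finset.range N, ((f (zs (i + j)) (x (i + j))).length : ℝ) := by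
        rw [Finset.sum_Ico_eq_sum_range]
        simp only [Nat.add_sub_cancel_left]
        apply Finset.sum_congr rfl
        intro i _
        rw [add_comm j i]
      rw [← hre]
      apply Finset.sum_le_sum_of_subset_of_nonneg
      · intro t ht
        simp only [Finset.mem_Ico, Finset.mem_range] at *
        omega
      · intro t _ _
        positivity
    calc ∑ j ∈ Finset.range ℓ, ∑ i ∈ Finset.range N,
          ((f (zs (i + j)) (x (i + j))).length : ℝ)
        ≤ ∑ _j ∈ Finset.range ℓ, ∑ t ∈ Finset.range n, ((f (zs t) (x t)).length : ℝ) :=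
          Finset.sum_le_sum hjb
      _ = (ℓ : ℝ) * ∑ t ∈ Finset.range n, ((f (zs t) (x t)).length : ℝ) := by
          rw [Finset.sum_const, Finset.card_range, nsmul_eq_mul]
  -- final arithmetic
  rw [ge_iff_le]
  set S0 : ℝ := ∑ i ∈ Finset.range n, ((f (zs i) (x i)).length : ℝ) with hS0def
  have hS0nn : 0 ≤ S0 := hS0def ▸ Finset.sum_nonneg fun i _ => by positivity
  clear_value S0 B SP SA C sZ Nr
  have hbpos : (0:ℝ) < (ℓ : ℝ) := by exact_mod_cast hℓ
  have hapos : (0:ℝ) < (n : ℝ) := by exact_mod_cast hnpos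
  have hba : (ℓ : ℝ) ≤ (n : ℝ) := by exact_mod_cast hn
  have hBle : B ≤ (ℓ : ℝ) * S0 / Nr := by
    rw [hEL]
    exact div_le_div_of_le_pos' h10 hNrpos
  have hH : entD (swJoint zs x n ℓ) - entD (swStateDist zs n ℓ)
      ≤ (ℓ : ℝ) * S0 / Nr + Real.logb 2 C := by linarith [hstar, hBle]
  have hcoef : (0:ℝ) ≤ 1 - (ℓ : ℝ) / (n : ℝ) := by
    rw [sub_nonneg, div_le_one hapos]; exact hba
  have h1 : (entD (swJoint zs x n ℓ) - entD (swStateDist zs n ℓ)) / (ℓ : ℝ)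
      ≤ ((ℓ : ℝ) * S0 / Nr + Real.logb 2 C) / (ℓ : ℝ) :=
    div_le_div_of_le_pos' hH hbpos
  have h1' : ((ℓ : ℝ) * S0 / Nr + Real.logb 2 C) / (ℓ : ℝ)
      = S0 / Nr + Real.logb 2 C / (ℓ : ℝ) := by
    rw [add_div]
    congr 1
    rw [mul_div_assoc, mul_div_cancel_left₀ _ (ne_of_gt hbpos)]
  have h2 : (1 - (ℓ : ℝ) / n) * ((entD (swJoint zs x n ℓ) - entD (swStateDist zs n ℓ)) / ℓ)
      ≤ (1 - (ℓ : ℝ) / n) * (S0 / Nr + Real.logb 2 C / (ℓ : ℝ)) := by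
    apply mul_le_mul_of_nonneg_left _ hcoef
    rw [← h1']
    exact h1
  have t1 : (1 - (ℓ : ℝ) / n) * (S0 / Nr) ≤ S0 / (n : ℝ) := by
    have e1 : 1 - (ℓ : ℝ) / n ≤ Nr / n := by
      rw [hNrdef, le_div_iff₀ hapos]
      have e0 : (1 - (ℓ : ℝ)/n) * n = (n : ℝ) - ℓ := by field_simp
      rw [e0]; linarith
    have e2 : (1 - (ℓ : ℝ)/n) * (S0/Nr) ≤ (Nr/n) * (S0/Nr) :=
      mul_le_mul_of_nonneg_right e1 (by positivity)
    have e3 : (Nr/(n:ℝ)) * (S0/Nr) = S0/(n:ℝ) := by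
      rw [div_mul_div_comm, mul_comm (n:ℝ) Nr]
      exact mul_div_mul_left S0 (n:ℝ) (ne_of_gt hNrpos)
    linarith
  have t2 : (1 - (ℓ : ℝ) / n) * (Real.logb 2 C / (ℓ : ℝ))
      ≤ 1 * (Real.logb 2 C / (ℓ : ℝ)) := by
    apply mul_le_mul_of_nonneg_right _ (div_nonneg hlogC (le_of_lt hbpos))
    have hd : (0:ℝ) ≤ (ℓ : ℝ) / n := by positivity
    linarith
  have hsplit2 : (1 - (ℓ : ℝ) / n) * (S0 / Nr + Real.logb 2 C / (ℓ : ℝ))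
      = (1 - (ℓ : ℝ) / n) * (S0 / Nr) + (1 - (ℓ : ℝ) / n) * (Real.logb 2 C / (ℓ : ℝ)) := by
    ring
  have hone : (1 / (ℓ : ℝ)) * Real.logb 2 C = Real.logb 2 C / (ℓ : ℝ) := by ring
  linarith [h2, t1, t2, hsplit2, hone]
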